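/- arXiv:1905.06899 — 4 statements merged into one kernel-verified Lean document; each statement's English description precedes it below -/
import Mathlib

section
/- Let f be a nonnegative simple integrable function on a charge space (Ω, F, μ), written f = Σ_{k=1}^N α_k 1_{E_k} with α_k > 0 and a decreasing chain E_N ⊆ E_{N-1} ⊆ ... ⊆ E_1 of sets in F of finite charge. Then ∫_Ω f dμ = ∫_0^∞ μ_f(t) dt, where μ_f(t) = μ*({ω : f(ω) > t}) is the distribution function of f and the right-hand integral is a Lebesgue integral on (0,∞). -/
open Set ENNReal MeasureTheory

def IsSetField {Ω : Type*} (𝓕 : Set (Set Ω)) : Prop :=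
  Set.univ ∈ 𝓕 ∧ (∀ A B : Set Ω, A ∈ 𝓕 → B ∈ 𝓕 → A ∪ B ∈ 𝓕) ∧
    (∀ A B : Set Ω, A ∈ 𝓕 → B ∈ 𝓕 → A \ B ∈ 𝓕)

def IsCharge {Ω : Type*} (𝓕 : Set (Set Ω)) (μ : Set Ω → ℝ≥0∞) : Prop :=
  μ ∅ = 0 ∧ ∀ A B : Set Ω, A ∈ 𝓕 → B ∈ 𝓕 → Disjoint A B → μ (A ∪ B) = μ A + μ B

noncomputable def outerCharge {Ω : Type*} (𝓕 : Set (Set Ω)) (μ : Set Ω → ℝ≥0∞)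
    (E : Set Ω) : ℝ≥0∞ :=
  ⨅ (F : Set Ω) (_ : F ∈ 𝓕) (_ : E ⊆ F), μ F

/-!
Write `S j = α 0 + ⋯ + α (j - 1)`. By the chain condition, `ω ∈ E k` forces `f ω ≥ S (k + 1)`
while `ω ∉ E k` forces `f ω ≤ S k`; hence `{f > t} = E k` for `t ∈ [S k, S (k + 1))` and
`{f > t} = ∅` for `t ≥ S N`. So `t ↦ μ*({f > t})` is a step function with value
`μ*(E k) = μ(E k)` on an interval of length `α k`, and its integral is `∑ α k μ(E k)`.
-/

section Charge

variable {Ω : Type*} {𝓕 : Set (Set Ω)} {μ : Set Ω → ℝ≥0∞}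

theorem IsSetField.empty_mem (hF : IsSetField 𝓕) : ∅ ∈ 𝓕 := by
  simpa using hF.2.2 univ univ hF.1 hF.1

theorem outerCharge_eq_of_mem (hF : IsSetField 𝓕) (hμ : IsCharge 𝓕 μ) {A : Set Ω}
    (hA : A ∈ 𝓕) : outerCharge 𝓕 μ A = μ A := by
  refine le_antisymm (iInf₂_le_of_le A hA (iInf_le _ subset_rfl)) ?_
  refine le_iInf₂ fun F hFm => le_iInf fun hAF => ?_
  calc μ A ≤ μ A + μ (F \ A) := le_self_add
    _ = μ F := by
      rw [← hμ.2 A (F \ A) hA (hF.2.2 F A hFm hA) disjoint_sdiff_right,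
        union_sdiff_cancel hAF]

theorem outerCharge_empty (hF : IsSetField 𝓕) (hμ : IsCharge 𝓕 μ) :
    outerCharge 𝓕 μ ∅ = 0 := by
  rw [outerCharge_eq_of_mem hF hμ hF.empty_mem, hμ.1]

end Charge

section LayerCake

variable {Ω : Type*} {N : ℕ} {α : Fin N → ℝ} {E : Fin N → Set Ω}

-- Indexed by `ℕ` so that the library's lemmas on consecutive intervals `Ico (a i) (a (i + 1))`
-- apply to `a = partialSum α`.
def partialSum (α : Fin N → ℝ) (j : ℕ) : ℝ :=
  ∑ k ∈ Finset.univ.filter (fun k : Fin N => (k : ℕ) < j), α k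

@[simp]
theorem partialSum_zero : partialSum α 0 = 0 := by
  simp [partialSum]

theorem partialSum_succ (k : Fin N) : partialSum α (k + 1) = partialSum α k + α k := by
  have : Finset.univ.filter (fun l : Fin N => (l : ℕ) < k + 1)
      = insert k (Finset.univ.filter (fun l : Fin N => (l : ℕ) < k)) := by
    ext l
    simp only [Finset.mem_filter, Finset.mem_univ, true_and, Finset.mem_insert, Fin.ext_iff]
    omega
  rw [partialSum, this, Finset.sum_insert (by simp), add_comm]
  rfl

theorem partialSum_monotone (hα : ∀ k, 0 ≤ α k) : Monotone (partialSum α) :=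
  fun _ _ hij => Finset.sum_le_sum_of_subset_of_nonneg
    (Finset.monotone_filter_right _ fun _ _ hk => hk.trans_le hij) fun k _ _ => hα k

theorem partialSum_nonneg (hα : ∀ k, 0 ≤ α k) (j : ℕ) : 0 ≤ partialSum α j :=
  partialSum_zero (α := α) ▸ partialSum_monotone hα j.zero_le

theorem partialSum_le_sum_indicator (hα : ∀ k, 0 ≤ α k) {j : ℕ} {ω : Ω}
    (hω : ∀ l : Fin N, (l : ℕ) < j → ω ∈ E l) :
    partialSum α j ≤ ∑ l, α l * (E l).indicator (fun _ => (1 : ℝ)) ω := by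
  rw [partialSum, Finset.sum_filter]
  refine Finset.sum_le_sum fun l _ => ?_
  split_ifs with hl
  · simp [hω l hl]
  · exact mul_nonneg (hα l) (indicator_nonneg (fun _ _ => zero_le_one) ω)

theorem sum_indicator_le_partialSum (hα : ∀ k, 0 ≤ α k) {j : ℕ} {ω : Ω}
    (hω : ∀ l : Fin N, j ≤ (l : ℕ) → ω ∉ E l) :
    ∑ l, α l * (E l).indicator (fun _ => (1 : ℝ)) ω ≤ partialSum α j := by
  rw [partialSum, Finset.sum_filter]
  refine Finset.sum_le_sum fun l _ => ?_
  split_ifs with hl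
  · by_cases hlE : ω ∈ E l <;> simp [hlE, hα l]
  · simp [hω l (not_lt.1 hl)]

theorem superlevel_eq_of_mem_Ico (hα : ∀ k, 0 ≤ α k)
    (hchain : ∀ k l : Fin N, k ≤ l → E l ⊆ E k) {k : Fin N} {t : ℝ}
    (ht : t ∈ Ico (partialSum α k) (partialSum α (k + 1))) :
    {ω | t < ∑ l, α l * (E l).indicator (fun _ => (1 : ℝ)) ω} = E k := by
  ext ω
  refine ⟨fun hlt => ?_, fun hω => ?_⟩
  · by_contra hω
    have := sum_indicator_le_partialSum hα (j := k) (ω := ω)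
      fun l hl hωl => hω (hchain k l hl hωl)
    exact (ht.1.trans_lt (hlt.trans_le this)).false
  · exact ht.2.trans_le <| partialSum_le_sum_indicator hα fun l hl =>
      hchain l k (Nat.lt_succ_iff.1 hl) hω

theorem superlevel_eq_empty (hα : ∀ k, 0 ≤ α k) {t : ℝ} (ht : partialSum α N ≤ t) :
    {ω | t < ∑ l, α l * (E l).indicator (fun _ => (1 : ℝ)) ω} = ∅ :=
  eq_empty_iff_forall_notMem.2 fun _ hω => (ht.trans_lt <| hω.trans_le <|
    sum_indicator_le_partialSum hα fun l hl => (l.2.not_ge hl).elim).false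

theorem apply_superlevel_eq_sum_indicator (ν : Set Ω → ℝ≥0∞) (hν : ν ∅ = 0)
    (hα : ∀ k, 0 ≤ α k) (hchain : ∀ k l : Fin N, k ≤ l → E l ⊆ E k) {t : ℝ} (ht : 0 ≤ t) :
    ν {ω | t < ∑ l, α l * (E l).indicator (fun _ => (1 : ℝ)) ω}
      = ∑ k : Fin N, (Ico (partialSum α k) (partialSum α (k + 1))).indicator
          (fun _ => ν (E k)) t := by
  have hmono := partialSum_monotone hα
  rcases lt_or_ge t (partialSum α N) with htN | htN
  · obtain ⟨i, hi, hti⟩ := mem_iUnion₂.1 <|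
      Ico_subset_biUnion_Ico N (partialSum α) ⟨partialSum_zero (α := α) ▸ ht, htN⟩
    set k : Fin N := ⟨i, Finset.mem_range.1 hi⟩
    rw [superlevel_eq_of_mem_Ico hα hchain (k := k) hti,
      Finset.sum_eq_single_of_mem k (Finset.mem_univ _), indicator_of_mem hti]
    intro l _ hlk
    refine indicator_of_notMem (fun htl => ?_) _
    have := hmono.pairwise_disjoint_on_Ico_succ (Fin.val_injective.ne hlk)
    simp only [Function.onFun, Order.succ_eq_add_one] at this
    exact disjoint_left.1 this htl hti
  · rw [superlevel_eq_empty hα htN, hν]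
    refine (Finset.sum_eq_zero fun k _ => indicator_of_notMem (fun htk => ?_) _).symm
    exact (htk.2.trans_le (hmono (Nat.succ_le_of_lt k.2))).not_ge htN

theorem setLIntegral_Ioi_apply_superlevel_eq_sum (ν : Set Ω → ℝ≥0∞) (hν : ν ∅ = 0)
    (hα : ∀ k, 0 ≤ α k) (hchain : ∀ k l : Fin N, k ≤ l → E l ⊆ E k) :
    ∫⁻ t in Ioi (0 : ℝ), ν {ω | t < ∑ l, α l * (E l).indicator (fun _ => (1 : ℝ)) ω}
      = ∑ k, ENNReal.ofReal (α k) * ν (E k) := by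
  rw [setLIntegral_congr Ioi_ae_eq_Ici, setLIntegral_congr_fun measurableSet_Ici
      fun t ht => apply_superlevel_eq_sum_indicator ν hν hα hchain ht,
    lintegral_finsetSum _ fun k _ => measurable_const.indicator measurableSet_Ico]
  refine Finset.sum_congr rfl fun k _ => ?_
  rw [lintegral_indicator_const measurableSet_Ico, Measure.restrict_apply measurableSet_Ico,
    inter_eq_left.2 (show Ico _ _ ⊆ Ici (0 : ℝ) from
      fun _ ht => (partialSum_nonneg hα k).trans ht.1),
    Real.volume_Ico, partialSum_succ, add_sub_cancel_left, mul_comm]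

end LayerCake

theorem integral_eq_lintegral_distribution_general {Ω : Type*} (𝓕 : Set (Set Ω))
    (μ : Set Ω → ℝ≥0∞) (hF : IsSetField 𝓕) (hμ : IsCharge 𝓕 μ)
    (N : ℕ) (α : Fin N → ℝ) (E : Fin N → Set Ω)
    (hα : ∀ k, 0 < α k)
    (hE : ∀ k, E k ∈ 𝓕)
    (hchain : ∀ k l : Fin N, k ≤ l → E l ⊆ E k)
    (f : Ω → ℝ) (hf : f = fun ω => ∑ k, α k * (E k).indicator (fun _ => (1:ℝ)) ω) :
    ∑ k, ENNReal.ofReal (α k) * μ (E k)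
      = ∫⁻ t in Set.Ioi (0:ℝ), outerCharge 𝓕 μ {ω | t < f ω} := by
  subst hf
  rw [setLIntegral_Ioi_apply_superlevel_eq_sum _ (outerCharge_empty hF hμ) (fun k => (hα k).le)
    hchain]
  simp_rw [outerCharge_eq_of_mem hF hμ (hE _)]

/-- For a nonnegative simple integrable function `f = ∑ α_k 1_{E_k}` with `α_k > 0`
and a decreasing chain of sets `E_k` of finite charge in the field,
`∫_Ω f dμ = ∫_0^∞ μ_f(t) dt` where `μ_f(t) = μ*({f > t})`. -/
theorem integral_eq_lintegral_distribution {Ω : Type*} (𝓕 : Set (Set Ω))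
    (μ : Set Ω → ℝ≥0∞) (hF : IsSetField 𝓕) (hμ : IsCharge 𝓕 μ)
    (N : ℕ) (α : Fin N → ℝ) (E : Fin N → Set Ω)
    (hα : ∀ k, 0 < α k)
    (hE : ∀ k, E k ∈ 𝓕) (hEfin : ∀ k, μ (E k) ≠ ∞)
    (hchain : ∀ k l : Fin N, k ≤ l → E l ⊆ E k)
    (f : Ω → ℝ) (hf : f = fun ω => ∑ k, α k * (E k).indicator (fun _ => (1:ℝ)) ω) :
    ∑ k, ENNReal.ofReal (α k) * μ (E k)
      = ∫⁻ t in Set.Ioi (0:ℝ), outerCharge 𝓕 μ {ω | t < f ω} :=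
  integral_eq_lintegral_distribution_general 𝓕 μ hF hμ N α E hα hE hchain f hf
end

section
/- Let f, g be nonnegative simple integrable functions on a charge space (Ω, F, μ). Then ∫_Ω |f − g| dμ = ∫_0^∞ |μ_{f∨g}(t) − μ_{f∧g}(t)| dt, where f∨g = max(f,g), f∧g = min(f,g), and μ_h(t) = μ*({h > t}). -/
open Set ENNReal MeasureTheory

/-- `f` is a simple integrable function: finitely many values, each nonzero value
taken on a set of the field of finite charge. -/
def IsSimpleInt {Ω : Type*} (𝓕 : Set (Set Ω)) (μ : Set Ω → ℝ≥0∞) (f : Ω → ℝ) : Prop :=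
  (Set.range f).Finite ∧ ∀ c : ℝ, c ≠ 0 → {ω | f ω = c} ∈ 𝓕 ∧ μ {ω | f ω = c} ≠ ∞

/-- The charge integral of a nonnegative simple function,
`∫ f dμ = ∑_c c · μ({f = c})`. -/
noncomputable def chargeIntegral {Ω : Type*} (μ : Set Ω → ℝ≥0∞) (f : Ω → ℝ) : ℝ≥0∞ :=
  ∑' c : ℝ, ENNReal.ofReal c * μ {ω | f ω = c}

/-- The absolute difference in `ℝ≥0∞`. -/
noncomputable def absd (a b : ℝ≥0∞) : ℝ≥0∞ := (a - b) ⊔ (b - a)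

/-!
The pair `(f, g)` takes finitely many values and its fibres are sets of `𝓕` partitioning `Ω`.
Every function `φ (f, g)` is constant on the fibres, so its charge integral and the charge of
each superlevel set `{t < φ (f, g)}` are finite sums over the fibres; in particular the
superlevel sets lie in `𝓕`, where the outer charge is `μ` itself. Integrating over `t > 0`
turns the fibre term `1_{t < φ a}` into the length `φ a` (layer cake), so both sides reduce
to `∫ max f g - ∫ min f g`, using `|f - g| = max f g - min f g` and the finiteness of
`∫ min f g`.
-/

section

variable {Ω : Type*} {𝓕 : Set (Set Ω)} {μ : Set Ω → ℝ≥0∞}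

namespace IsSetField

theorem empty_mem_s2 (hF : IsSetField 𝓕) : ∅ ∈ 𝓕 := by
  simpa using hF.2.2 _ _ hF.1 hF.1

theorem inter_mem (hF : IsSetField 𝓕) {A B : Set Ω} (hA : A ∈ 𝓕) (hB : B ∈ 𝓕) :
    A ∩ B ∈ 𝓕 := by
  simpa [sdiff_sdiff_right_self] using hF.2.2 A (A \ B) hA (hF.2.2 A B hA hB)

theorem biUnion_mem (hF : IsSetField 𝓕) {ι : Type*} {E : ι → Set Ω} (s : Finset ι)
    (h : ∀ i ∈ s, E i ∈ 𝓕) : ⋃ i ∈ s, E i ∈ 𝓕 := by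
  classical
  induction s using Finset.induction_on with
  | empty => simpa using hF.empty_mem_s2
  | insert a s _ ih =>
    rw [Finset.set_biUnion_insert]
    exact hF.2.1 _ _ (h a (Finset.mem_insert_self a s))
      (ih fun i hi => h i (Finset.mem_insert_of_mem hi))

end IsSetField

namespace IsCharge

theorem mono (hF : IsSetField 𝓕) (hμ : IsCharge 𝓕 μ) {A B : Set Ω}
    (hA : A ∈ 𝓕) (hB : B ∈ 𝓕) (hAB : A ⊆ B) : μ A ≤ μ B := by
  rw [← union_sdiff_cancel hAB, hμ.2 A (B \ A) hA (hF.2.2 B A hB hA) disjoint_sdiff_right]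
  exact le_self_add

theorem biUnion_finset (hF : IsSetField 𝓕) (hμ : IsCharge 𝓕 μ) {ι : Type*} {E : ι → Set Ω}
    (s : Finset ι) (hmem : ∀ i ∈ s, E i ∈ 𝓕) (hdisj : (s : Set ι).PairwiseDisjoint E) :
    μ (⋃ i ∈ s, E i) = ∑ i ∈ s, μ (E i) := by
  classical
  induction s using Finset.induction_on with
  | empty => simpa using hμ.1
  | insert a s ha ih =>
    rw [Finset.coe_insert, pairwiseDisjoint_insert] at hdisj
    have hmem' : ∀ i ∈ s, E i ∈ 𝓕 := fun i hi => hmem i (Finset.mem_insert_of_mem hi)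
    rw [Finset.set_biUnion_insert, Finset.sum_insert ha, ← ih hmem' hdisj.1]
    refine hμ.2 _ _ (hmem a (Finset.mem_insert_self a s)) (hF.biUnion_mem s hmem') ?_
    exact disjoint_iUnion₂_right.mpr fun i hi => hdisj.2 i hi fun h => ha (h ▸ hi)

end IsCharge

theorem outerCharge_of_mem (hF : IsSetField 𝓕) (hμ : IsCharge 𝓕 μ) {E : Set Ω} (hE : E ∈ 𝓕) :
    outerCharge 𝓕 μ E = μ E :=
  le_antisymm (iInf₂_le_of_le E hE (iInf_le _ subset_rfl))
    (le_iInf₂ fun _ hB => le_iInf fun hEB => hμ.mono hF hE hB hEB)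

theorem IsSimpleInt.preimage_singleton_mem (hF : IsSetField 𝓕) {f : Ω → ℝ}
    (hf : IsSimpleInt 𝓕 μ f) (c : ℝ) : f ⁻¹' {c} ∈ 𝓕 := by
  classical
  rcases ne_or_eq c 0 with hc | rfl
  · exact (hf.2 c hc).1
  have hzero : f ⁻¹' {0} = univ \ ⋃ c ∈ hf.1.toFinset.erase 0, f ⁻¹' {c} := by
    ext ω
    simp [eq_comm]
  rw [hzero]
  exact hF.2.2 _ _ hF.1 (hF.biUnion_mem _ fun c hc => (hf.2 c (Finset.ne_of_mem_erase hc)).1)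

section

variable {α : Type*} {F : Ω → α} {s : Finset α}

theorem preimage_eq_biUnion_fiber (hs : ∀ ω, F ω ∈ s) (S : Set α) [DecidablePred (· ∈ S)] :
    F ⁻¹' S = ⋃ a ∈ s.filter (· ∈ S), F ⁻¹' {a} := by
  ext ω
  simp [hs ω]

theorem IsSetField.preimage_mem (hF : IsSetField 𝓕) (hs : ∀ ω, F ω ∈ s)
    (hmem : ∀ a, F ⁻¹' {a} ∈ 𝓕) (S : Set α) : F ⁻¹' S ∈ 𝓕 := by
  classical
  rw [preimage_eq_biUnion_fiber hs S]
  exact hF.biUnion_mem _ fun a _ => hmem a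

theorem IsCharge.preimage_eq_sum (hF : IsSetField 𝓕) (hμ : IsCharge 𝓕 μ) (hs : ∀ ω, F ω ∈ s)
    (hmem : ∀ a, F ⁻¹' {a} ∈ 𝓕) (S : Set α) [DecidablePred (· ∈ S)] :
    μ (F ⁻¹' S) = ∑ a ∈ s.filter (· ∈ S), μ (F ⁻¹' {a}) := by
  rw [preimage_eq_biUnion_fiber hs S]
  exact hμ.biUnion_finset hF _ (fun a _ => hmem a) (pairwiseDisjoint_fiber F _)

theorem chargeIntegral_eq_sum (hμ : μ ∅ = 0) {h : Ω → ℝ} {t : Finset ℝ} (ht : ∀ ω, h ω ∈ t) :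
    chargeIntegral μ h = ∑ c ∈ t, ENNReal.ofReal c * μ (h ⁻¹' {c}) := by
  refine tsum_eq_sum fun c hc => ?_
  have : {ω | h ω = c} = ∅ := eq_empty_of_forall_notMem fun ω hω => hc (hω ▸ ht ω)
  rw [this, hμ, mul_zero]

theorem chargeIntegral_comp_eq_sum (hF : IsSetField 𝓕) (hμ : IsCharge 𝓕 μ) (hs : ∀ ω, F ω ∈ s)
    (hmem : ∀ a, F ⁻¹' {a} ∈ 𝓕) (φ : α → ℝ) :
    chargeIntegral μ (fun ω => φ (F ω)) = ∑ a ∈ s, ENNReal.ofReal (φ a) * μ (F ⁻¹' {a}) := by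
  classical
  rw [chargeIntegral_eq_sum hμ.1 fun ω => Finset.mem_image_of_mem φ (hs ω),
    ← Finset.sum_fiberwise_of_maps_to fun a ha => Finset.mem_image_of_mem φ ha]
  refine Finset.sum_congr rfl fun c _ => ?_
  rw [show (fun ω => φ (F ω)) ⁻¹' {c} = F ⁻¹' (φ ⁻¹' {c}) from rfl,
    hμ.preimage_eq_sum hF hs hmem, Finset.mul_sum]
  refine Finset.sum_congr rfl fun a ha => ?_
  rw [(Finset.mem_filter.mp ha).2]

theorem setLIntegral_Ioi_zero_indicator_Iio (v : ℝ) (m : ℝ≥0∞) :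
    ∫⁻ t in Ioi 0, (Iio v).indicator (fun _ => m) t = ENNReal.ofReal v * m := by
  rw [lintegral_indicator measurableSet_Iio, Measure.restrict_restrict measurableSet_Iio,
    Iio_inter_Ioi, setLIntegral_const, Real.volume_Ioo, sub_zero, mul_comm]

theorem lintegral_charge_lt_eq_chargeIntegral (hF : IsSetField 𝓕) (hμ : IsCharge 𝓕 μ)
    (hs : ∀ ω, F ω ∈ s) (hmem : ∀ a, F ⁻¹' {a} ∈ 𝓕) (φ : α → ℝ) :
    ∫⁻ t in Ioi 0, μ {ω | t < φ (F ω)} = chargeIntegral μ (fun ω => φ (F ω)) := by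
  classical
  have hlevel : ∀ t : ℝ, μ {ω | t < φ (F ω)}
      = ∑ a ∈ s, (Iio (φ a)).indicator (fun _ => μ (F ⁻¹' {a})) t := fun t => by
    rw [show {ω | t < φ (F ω)} = F ⁻¹' {a | t < φ a} from rfl, hμ.preimage_eq_sum hF hs hmem,
      Finset.sum_filter]
    rfl
  simp_rw [hlevel]
  rw [lintegral_finsetSum _ fun a _ => measurable_const.indicator measurableSet_Iio,
    chargeIntegral_comp_eq_sum hF hμ hs hmem]
  simp_rw [setLIntegral_Ioi_zero_indicator_Iio]

theorem chargeIntegral_comp_add (hF : IsSetField 𝓕) (hμ : IsCharge 𝓕 μ) (hs : ∀ ω, F ω ∈ s)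
    (hmem : ∀ a, F ⁻¹' {a} ∈ 𝓕) {φ ψ : α → ℝ} (hφ : ∀ a ∈ s, 0 ≤ φ a) (hψ : ∀ a ∈ s, 0 ≤ ψ a) :
    chargeIntegral μ (fun ω => φ (F ω) + ψ (F ω))
      = chargeIntegral μ (fun ω => φ (F ω)) + chargeIntegral μ (fun ω => ψ (F ω)) := by
  rw [chargeIntegral_comp_eq_sum hF hμ hs hmem (fun a => φ a + ψ a),
    chargeIntegral_comp_eq_sum hF hμ hs hmem, chargeIntegral_comp_eq_sum hF hμ hs hmem,
    ← Finset.sum_add_distrib]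
  refine Finset.sum_congr rfl fun a ha => ?_
  rw [ENNReal.ofReal_add (hφ a ha) (hψ a ha), add_mul]

end

namespace IsSimpleInt

variable {f g : Ω → ℝ}

theorem pair_mem_toFinset_prod (hf : IsSimpleInt 𝓕 μ f) (hg : IsSimpleInt 𝓕 μ g) (ω : Ω) :
    (f ω, g ω) ∈ hf.1.toFinset ×ˢ hg.1.toFinset := by
  simp

theorem pair_preimage_singleton_mem (hF : IsSetField 𝓕) (hf : IsSimpleInt 𝓕 μ f)
    (hg : IsSimpleInt 𝓕 μ g) (p : ℝ × ℝ) : (fun ω => (f ω, g ω)) ⁻¹' {p} ∈ 𝓕 := by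
  have : (fun ω => (f ω, g ω)) ⁻¹' {p} = f ⁻¹' {p.1} ∩ g ⁻¹' {p.2} := by
    ext ω
    simp [Prod.ext_iff]
  rw [this]
  exact hF.inter_mem (hf.preimage_singleton_mem hF _) (hg.preimage_singleton_mem hF _)

theorem superlevel_mem (hF : IsSetField 𝓕) (hf : IsSimpleInt 𝓕 μ f) (hg : IsSimpleInt 𝓕 μ g)
    (φ : ℝ → ℝ → ℝ) (t : ℝ) : {ω | t < φ (f ω) (g ω)} ∈ 𝓕 :=
  hF.preimage_mem (hf.pair_mem_toFinset_prod hg) (hf.pair_preimage_singleton_mem hF hg)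
    {p | t < φ p.1 p.2}

theorem lintegral_charge_lt_eq_chargeIntegral (hF : IsSetField 𝓕) (hμ : IsCharge 𝓕 μ)
    (hf : IsSimpleInt 𝓕 μ f) (hg : IsSimpleInt 𝓕 μ g) (φ : ℝ → ℝ → ℝ) :
    ∫⁻ t in Ioi 0, μ {ω | t < φ (f ω) (g ω)} = chargeIntegral μ (fun ω => φ (f ω) (g ω)) :=
  _root_.lintegral_charge_lt_eq_chargeIntegral hF hμ (hf.pair_mem_toFinset_prod hg)
    (hf.pair_preimage_singleton_mem hF hg) fun p => φ p.1 p.2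

theorem chargeIntegral_max_eq (hF : IsSetField 𝓕) (hμ : IsCharge 𝓕 μ)
    (hf : IsSimpleInt 𝓕 μ f) (hg : IsSimpleInt 𝓕 μ g) (hf0 : ∀ ω, 0 ≤ f ω) (hg0 : ∀ ω, 0 ≤ g ω) :
    chargeIntegral μ (fun ω => max (f ω) (g ω))
      = chargeIntegral μ (fun ω => |f ω - g ω|) + chargeIntegral μ (fun ω => min (f ω) (g ω)) := by
  have hmin_nonneg : ∀ p ∈ hf.1.toFinset ×ˢ hg.1.toFinset, 0 ≤ min p.1 p.2 := by
    simp only [Finset.mem_product, Finite.mem_toFinset, mem_range]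
    rintro ⟨a, b⟩ ⟨⟨ω, rfl⟩, ⟨ω', rfl⟩⟩
    exact le_min (hf0 ω) (hg0 ω')
  calc _ = chargeIntegral μ (fun ω => |f ω - g ω| + min (f ω) (g ω)) := by
        simp only [← max_sub_min_eq_abs', sub_add_cancel]
    _ = _ := chargeIntegral_comp_add hF hμ (hf.pair_mem_toFinset_prod hg)
        (hf.pair_preimage_singleton_mem hF hg) (φ := fun p => |p.1 - p.2|)
        (fun _ _ => abs_nonneg _) hmin_nonneg

theorem chargeIntegral_min_ne_top (hF : IsSetField 𝓕) (hμ : IsCharge 𝓕 μ)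
    (hf : IsSimpleInt 𝓕 μ f) (hg : IsSimpleInt 𝓕 μ g) :
    chargeIntegral μ (fun ω => min (f ω) (g ω)) ≠ ∞ := by
  rw [chargeIntegral_comp_eq_sum hF hμ (hf.pair_mem_toFinset_prod hg)
    (hf.pair_preimage_singleton_mem hF hg) fun p => min p.1 p.2]
  refine ENNReal.sum_ne_top.mpr fun p _ => ?_
  rcases le_or_gt (min p.1 p.2) 0 with hp | hp
  · simp [ENNReal.ofReal_of_nonpos hp]
  have h1 : p.1 ≠ 0 := (hp.trans_le (min_le_left _ _)).ne'
  refine mul_ne_top ofReal_ne_top (ne_top_of_le_ne_top (hf.2 _ h1).2 ?_)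
  exact hμ.mono hF (hf.pair_preimage_singleton_mem hF hg p) (hf.2 _ h1).1
    fun ω hω => congrArg Prod.fst hω

end IsSimpleInt

end

theorem absd_of_le {a b : ℝ≥0∞} (h : b ≤ a) : absd a b = a - b := by
  rw [absd, tsub_eq_zero_of_le h, max_zero]

/-- For nonnegative simple integrable `f, g`:
`∫_Ω |f − g| dμ = ∫_0^∞ |μ_{f∨g}(t) − μ_{f∧g}(t)| dt`. -/
theorem integral_abs_sub_eq {Ω : Type*} (𝓕 : Set (Set Ω)) (μ : Set Ω → ℝ≥0∞)
    (hF : IsSetField 𝓕) (hμ : IsCharge 𝓕 μ) (f g : Ω → ℝ)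
    (hf : IsSimpleInt 𝓕 μ f) (hg : IsSimpleInt 𝓕 μ g)
    (hf0 : ∀ ω, 0 ≤ f ω) (hg0 : ∀ ω, 0 ≤ g ω) :
    chargeIntegral μ (fun ω => |f ω - g ω|)
      = ∫⁻ t in Set.Ioi (0:ℝ),
          absd (outerCharge 𝓕 μ {ω | t < max (f ω) (g ω)})
               (outerCharge 𝓕 μ {ω | t < min (f ω) (g ω)}) := by
  have hmax_mem := hf.superlevel_mem hF hg max
  have hmin_mem := hf.superlevel_mem hF hg min
  have hle (t : ℝ) : μ {ω | t < min (f ω) (g ω)} ≤ μ {ω | t < max (f ω) (g ω)} :=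
    hμ.mono hF (hmin_mem t) (hmax_mem t) fun _ hω => lt_of_lt_of_le (α := ℝ) hω min_le_max
  have hanti : Antitone fun t : ℝ => μ {ω | t < min (f ω) (g ω)} := fun t t' htt' =>
    hμ.mono hF (hmin_mem t') (hmin_mem t) fun _ hω => htt'.trans_lt hω
  have hmin_fin := hf.chargeIntegral_min_ne_top hF hμ hg
  have hmin_int := hf.lintegral_charge_lt_eq_chargeIntegral hF hμ hg min
  calc chargeIntegral μ (fun ω => |f ω - g ω|)
      = chargeIntegral μ (fun ω => max (f ω) (g ω))
          - chargeIntegral μ (fun ω => min (f ω) (g ω)) :=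
        ENNReal.eq_sub_of_add_eq hmin_fin (hf.chargeIntegral_max_eq hF hμ hg hf0 hg0).symm
    _ = ∫⁻ t in Ioi 0, (μ {ω | t < max (f ω) (g ω)} - μ {ω | t < min (f ω) (g ω)}) := by
      rw [lintegral_sub hanti.measurable (hmin_int ▸ hmin_fin) (ae_of_all _ hle), hmin_int,
        hf.lintegral_charge_lt_eq_chargeIntegral hF hμ hg max]
    _ = _ := by
      congr! 2 with t
      rw [outerCharge_of_mem hF hμ (hmax_mem t), outerCharge_of_mem hF hμ (hmin_mem t),
        absd_of_le (hle t)]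
end

section
/- Let f, g be simple integrable functions on a charge space (Ω, F, μ). Then ∫_0^∞ |μ_f(t) − μ_g(t)| dt ≤ ∫_Ω | |f| − |g| | dμ, where μ_f(t) = μ*({|f| > t}) is the distribution function. -/
open Set ENNReal MeasureTheory

/-! Split `Ω` into the finitely many atoms on which `(|f|, |g|)` is constant, say equal to
`(a, b)`. The symmetric difference of `{|f| > t}` and `{|g| > t}` is the union of the atoms with
`min a b ≤ t < max a b`, so `|μ_f(t) - μ_g(t)|` is at most the charge of those atoms. Integrating
in `t`, each atom contributes `|a - b|` times its charge, and these contributions add up to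
`∫ ||f| - |g|| dμ`. -/

open scoped symmDiff

lemma IsSetField.isSetRing {Ω : Type*} {𝓕 : Set (Set Ω)} (hF : IsSetField 𝓕) :
    IsSetRing 𝓕 where
  empty_mem := by simpa using hF.2.2 _ _ hF.1 hF.1
  union_mem _ _ := hF.2.1 _ _
  sdiff_mem _ _ := hF.2.2 _ _

noncomputable def IsCharge.toAddContent {Ω : Type*} {𝓕 : Set (Set Ω)} {μ : Set Ω → ℝ≥0∞}
    (hF : IsSetField 𝓕) (hμ : IsCharge 𝓕 μ) : AddContent ℝ≥0∞ 𝓕 :=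
  hF.isSetRing.addContent_of_union μ hμ.1 fun hs ht hst => hμ.2 _ _ hs ht hst

section Content

variable {Ω : Type*} {C : Set (Set Ω)}

lemma outerCharge_eq_of_mem_s3 (hC : IsSetSemiring C) (m : AddContent ℝ≥0∞ C) {s : Set Ω}
    (hs : s ∈ C) : outerCharge C m s = m s :=
  le_antisymm (iInf₂_le_of_le s hs (iInf_le _ subset_rfl))
    (le_iInf₂ fun _ ht => le_iInf fun hst => addContent_mono hC hs ht hst)

lemma absd_le_addContent_symmDiff (hC : IsSetRing C) (m : AddContent ℝ≥0∞ C) {s t : Set Ω}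
    (hs : s ∈ C) (ht : t ∈ C) : absd (m s) (m t) ≤ m (s ∆ t) := by
  have hst : s ∆ t ∈ C := hC.union_mem (hC.sdiff_mem hs ht) (hC.sdiff_mem ht hs)
  exact sup_le
    ((le_addContent_sdiff m hC hs ht).trans <| addContent_mono hC.isSetSemiring
      (hC.sdiff_mem hs ht) hst le_sup_left)
    ((le_addContent_sdiff m hC ht hs).trans <| addContent_mono hC.isSetSemiring
      (hC.sdiff_mem ht hs) hst le_sup_right)

end Content

def IsSimpleFun {Ω β : Type*} [Zero β] (C : Set (Set Ω)) (F : Ω → β) : Prop :=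
  (range F).Finite ∧ ∀ c, c ≠ 0 → F ⁻¹' {c} ∈ C

lemma IsSimpleInt.isSimpleFun {Ω : Type*} {𝓕 : Set (Set Ω)} {μ : Set Ω → ℝ≥0∞} {f : Ω → ℝ}
    (hf : IsSimpleInt 𝓕 μ f) : IsSimpleFun 𝓕 f :=
  ⟨hf.1, fun c hc => (hf.2 c hc).1⟩

open Classical in
lemma preimage_eq_biUnion_of_finite_range {Ω β : Type*} {F : Ω → β} (hF : (range F).Finite)
    (S : Set β) : F ⁻¹' S = ⋃ c ∈ hF.toFinset.filter (· ∈ S), F ⁻¹' {c} := by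
  ext ω
  simp

namespace IsSimpleFun

variable {Ω β : Type*} [Zero β] {C : Set (Set Ω)} {F : Ω → β}

lemma preimage_mem (hC : IsSetRing C) (hF : IsSimpleFun C F) {S : Set β} (hS : (0 : β) ∉ S) :
    F ⁻¹' S ∈ C := by
  classical
  rw [preimage_eq_biUnion_of_finite_range hF.1 S]
  exact hC.biUnion_mem _ fun c hc =>
    hF.2 c fun h0 => hS (h0 ▸ (Finset.mem_filter.mp hc).2)

lemma inter_preimage_mem (hC : IsSetRing C) (hF : IsSimpleFun C F) {s : Set Ω} (hs : s ∈ C)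
    (T : Set β) : s ∩ F ⁻¹' T ∈ C := by
  by_cases hT : (0 : β) ∈ T
  · rw [← sdiff_compl, ← preimage_compl]
    exact hC.sdiff_mem hs (hF.preimage_mem hC fun h => h hT)
  · exact hC.inter_mem hs (hF.preimage_mem hC hT)

lemma comp {γ : Type*} [Zero γ] (hC : IsSetRing C) (hF : IsSimpleFun C F) (φ : β → γ)
    (hφ : φ 0 = 0) : IsSimpleFun C (φ ∘ F) :=
  ⟨range_comp φ F ▸ hF.1.image φ, fun c hc =>
    hF.preimage_mem hC (S := φ ⁻¹' {c}) (by simpa [hφ] using hc.symm)⟩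

lemma prodMk {γ : Type*} [Zero γ] {G : Ω → γ} (hC : IsSetRing C) (hF : IsSimpleFun C F)
    (hG : IsSimpleFun C G) : IsSimpleFun C fun ω => (F ω, G ω) := by
  refine ⟨(hF.1.prod hG.1).subset ?_, ?_⟩
  · rintro _ ⟨ω, rfl⟩
    exact ⟨⟨ω, rfl⟩, ⟨ω, rfl⟩⟩
  · rintro ⟨a, b⟩ hab
    rw [← singleton_prod_singleton, mk_preimage_prod]
    by_cases ha : a = 0
    · have hb : b ≠ 0 := fun hb => hab (by rw [ha, hb, Prod.zero_eq_mk])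
      rw [inter_comm]
      exact hF.inter_preimage_mem hC (hG.2 b hb) _
    · exact hG.inter_preimage_mem hC (hF.2 a ha) _

open Classical in
lemma addContent_preimage_eq_sum {G : Type*} [AddCommMonoid G] (hC : IsSetRing C)
    (m : AddContent G C) (hF : IsSimpleFun C F) {S : Set β} (hS : (0 : β) ∉ S) :
    m (F ⁻¹' S) = ∑ c ∈ hF.1.toFinset.filter (· ∈ S), m (F ⁻¹' {c}) := by
  rw [preimage_eq_biUnion_of_finite_range hF.1 S]
  exact addContent_biUnion_eq hC
    (fun c hc => hF.2 c fun h0 => hS (h0 ▸ (Finset.mem_filter.mp hc).2))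
    ((pairwiseDisjoint_fiber F _).subset (subset_univ _))

end IsSimpleFun

theorem Set.Iio_symmDiff_Iio {α : Type*} [LinearOrder α] (a b : α) :
    Iio a ∆ Iio b = Ico (min a b) (max a b) := by
  ext t
  simp only [mem_symmDiff, mem_Iio, mem_Ico, min_le_iff, lt_max_iff, not_lt]
  grind

section Distribution

variable {Ω : Type*} {C : Set (Set Ω)} {u v : Ω → ℝ}

lemma absd_outerCharge_le_sum_indicator (hC : IsSetRing C) (m : AddContent ℝ≥0∞ C)
    (huv : IsSimpleFun C fun ω => (u ω, v ω)) {t : ℝ} (ht : 0 ≤ t) :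
    absd (outerCharge C m {ω | t < u ω}) (outerCharge C m {ω | t < v ω}) ≤
      ∑ p ∈ huv.1.toFinset, (Ico (min p.1 p.2) (max p.1 p.2)).indicator
        (fun _ => m ((fun ω => (u ω, v ω)) ⁻¹' {p})) t := by
  classical
  -- `0 ≤ t` keeps the atom of `(0, 0)`, which need not lie in `C`, out of the level sets.
  have hu : {ω | t < u ω} ∈ C :=
    huv.preimage_mem hC (S := {p | t < p.1}) (by simpa using ht)
  have hv : {ω | t < v ω} ∈ C :=
    huv.preimage_mem hC (S := {p | t < p.2}) (by simpa using ht)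
  rw [outerCharge_eq_of_mem_s3 hC.isSetSemiring m hu, outerCharge_eq_of_mem_s3 hC.isSetSemiring m hv]
  calc _ ≤ m ({ω | t < u ω} ∆ {ω | t < v ω}) := absd_le_addContent_symmDiff hC m hu hv
    _ = m ((fun ω => (u ω, v ω)) ⁻¹' {p | t ∈ Ico (min p.1 p.2) (max p.1 p.2)}) := by
      simp only [← Iio_symmDiff_Iio]
      rfl
    _ = _ := by
      rw [huv.addContent_preimage_eq_sum hC m (by simp), Finset.sum_filter]
      rfl

lemma lintegral_absd_outerCharge_le (hC : IsSetRing C) (m : AddContent ℝ≥0∞ C)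
    (huv : IsSimpleFun C fun ω => (u ω, v ω)) :
    ∫⁻ t in Ioi 0, absd (outerCharge C m {ω | t < u ω}) (outerCharge C m {ω | t < v ω}) ≤
      ∑ p ∈ huv.1.toFinset, ENNReal.ofReal |p.1 - p.2| * m ((fun ω => (u ω, v ω)) ⁻¹' {p}) :=
  calc _ ≤ ∫⁻ t in Ioi 0, ∑ p ∈ huv.1.toFinset, (Ico (min p.1 p.2) (max p.1 p.2)).indicator
        (fun _ => m ((fun ω => (u ω, v ω)) ⁻¹' {p})) t :=
      setLIntegral_mono' measurableSet_Ioi fun _ ht =>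
        absd_outerCharge_le_sum_indicator hC m huv ht.le
    _ ≤ ∫⁻ t, ∑ p ∈ huv.1.toFinset, (Ico (min p.1 p.2) (max p.1 p.2)).indicator
        (fun _ => m ((fun ω => (u ω, v ω)) ⁻¹' {p})) t := setLIntegral_le_lintegral _ _
    _ = _ := by
      rw [lintegral_finsetSum _ fun _ _ => measurable_const.indicator measurableSet_Ico]
      refine Finset.sum_congr rfl fun p _ => ?_
      rw [lintegral_indicator_const measurableSet_Ico, Real.volume_Ico, max_sub_min_eq_abs',
        mul_comm]

end Distribution

section Integral

variable {Ω β : Type*} [Zero β] {C : Set (Set Ω)} {F : Ω → β}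

lemma sum_le_chargeIntegral_comp (hC : IsSetRing C) (m : AddContent ℝ≥0∞ C)
    (hF : IsSimpleFun C F) (φ : β → ℝ) (hφ : φ 0 = 0) :
    ∑ p ∈ hF.1.toFinset, ENNReal.ofReal (φ p) * m (F ⁻¹' {p}) ≤
      chargeIntegral m fun ω => φ (F ω) := by
  classical
  calc _ = ∑ c ∈ hF.1.toFinset.image φ, ENNReal.ofReal c * m {ω | φ (F ω) = c} := by
        rw [← Finset.sum_fiberwise_of_maps_to fun p hp => Finset.mem_image_of_mem φ hp]
        refine Finset.sum_congr rfl fun c _ => ?_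
        by_cases hc : c = 0
        · simp +contextual [hc]
        · rw [show {ω | φ (F ω) = c} = F ⁻¹' (φ ⁻¹' {c}) from rfl,
            hF.addContent_preimage_eq_sum hC m (by simpa [hφ] using Ne.symm hc), Finset.mul_sum]
          exact Finset.sum_congr rfl fun p hp => by rw [(Finset.mem_filter.mp hp).2]
    _ ≤ _ := ENNReal.sum_le_tsum _

end Integral

/-- `∫_0^∞ |μ_f(t) − μ_g(t)| dt ≤ ∫_Ω ||f| − |g|| dμ` for simple integrable `f, g`. -/
theorem lintegral_absd_distribution_le {Ω : Type*} (𝓕 : Set (Set Ω)) (μ : Set Ω → ℝ≥0∞)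
    (hF : IsSetField 𝓕) (hμ : IsCharge 𝓕 μ) (f g : Ω → ℝ)
    (hf : IsSimpleInt 𝓕 μ f) (hg : IsSimpleInt 𝓕 μ g) :
    ∫⁻ t in Set.Ioi (0:ℝ),
        absd (outerCharge 𝓕 μ {ω | t < |f ω|}) (outerCharge 𝓕 μ {ω | t < |g ω|})
      ≤ chargeIntegral μ (fun ω => |(|f ω| - |g ω|)|) := by
  have hC := hF.isSetRing
  have habs : IsSimpleFun 𝓕 fun ω => (|f ω|, |g ω|) :=
    (hf.isSimpleFun.comp hC _ abs_zero).prodMk hC (hg.isSimpleFun.comp hC _ abs_zero)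
  let m := hμ.toAddContent hF
  exact (lintegral_absd_outerCharge_le hC m habs).trans
    (sum_le_chargeIntegral_comp hC m habs (fun p => |p.1 - p.2|) (by simp))
end

section
/- Let E ⊆ ℝ be a Lebesgue measurable set that is q-periodic (i.e., E + q = E) for some q > 0. Then for every a ∈ ℝ, lim_{t→∞} λ(E ∩ [−t,t])/(2t) exists and equals λ(E ∩ [a, a+q])/q. -/
/-!
For a `T`-periodic locally integrable `f`, the primitive `t ↦ ∫ x in 0..t, f x` differs from the
linear function `t ↦ (t / T) • ∫ x in 0..T, f x` by a continuous `T`-periodic, hence bounded,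
function. Dividing `∫ x in -t..t, f x` by `2 * t` therefore gives `T⁻¹ • ∫ x in 0..T, f x` up to an
`O(1/t)` error. The theorem is the case where `f` is the indicator of `E`.
-/

open MeasureTheory Filter Set Topology

namespace Function.Periodic

variable {E : Type*} [NormedAddCommGroup E] [NormedSpace ℝ E] {f : ℝ → E} {T : ℝ}

theorem periodic_intervalIntegral_sub_smul (hf : Periodic f T) (hT : T ≠ 0)
    (h_int : IntervalIntegrable f volume 0 T) :
    Periodic (fun t => (∫ x in 0..t, f x) - (t / T) • ∫ x in 0..T, f x) T := by
  intro t
  simp only [hf.intervalIntegral_add_eq_add 0 t (hf.intervalIntegrable₀ hT h_int), zero_add,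
    add_div, div_self hT, add_smul, one_smul]
  abel

theorem isBounded_range_intervalIntegral_sub_smul (hf : Periodic f T) (hT : T ≠ 0)
    (h_int : IntervalIntegrable f volume 0 T) :
    Bornology.IsBounded (range fun t => (∫ x in 0..t, f x) - (t / T) • ∫ x in 0..T, f x) :=
  (hf.periodic_intervalIntegral_sub_smul hT h_int).isBounded_of_continuous hT <|
    (intervalIntegral.continuous_primitive (hf.intervalIntegrable₀ hT h_int) 0).sub
      ((continuous_id.div_const T).smul continuous_const)

theorem tendsto_inv_two_mul_smul_intervalIntegral_neg (hf : Periodic f T) (hT : T ≠ 0)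
    (h_int : IntervalIntegrable f volume 0 T) :
    Tendsto (fun t => (2 * t)⁻¹ • ∫ x in -t..t, f x) atTop (𝓝 (T⁻¹ • ∫ x in 0..T, f x)) := by
  set Y := ∫ x in 0..T, f x
  set G := fun t => (∫ x in 0..t, f x) - (t / T) • Y
  obtain ⟨C, hC⟩ :=
    isBounded_iff_forall_norm_le.1 (hf.isBounded_range_intervalIntegral_sub_smul hT h_int)
  have h_eq : ∀ t ≠ 0,
      (2 * t)⁻¹ • (G t - G (-t)) + T⁻¹ • Y = (2 * t)⁻¹ • ∫ x in -t..t, f x := by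
    intro t ht
    have hprim : (∫ x in 0..t, f x) - ∫ x in 0..-t, f x = ∫ x in -t..t, f x :=
      intervalIntegral.integral_interval_sub_left (hf.intervalIntegrable₀ hT h_int 0 t)
        (hf.intervalIntegrable₀ hT h_int 0 (-t))
    have hcoef : (2 * t)⁻¹ * (t / T - -t / T) = T⁻¹ := by field_simp; ring
    have hdiff : G t - G (-t) = (∫ x in -t..t, f x) - (t / T - -t / T) • Y := by
      simp only [G, ← hprim, sub_smul]
      abel
    rw [hdiff, smul_sub, smul_smul, hcoef, sub_add_cancel]
  have hG : Tendsto (fun t => (2 * t)⁻¹ • (G t - G (-t))) atTop (𝓝 0) :=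
    (tendsto_inv_atTop_zero.comp (tendsto_id.const_mul_atTop two_pos)).zero_smul_isBoundedUnder_le
      (isBoundedUnder_of ⟨C + C, fun t => norm_sub_le_of_le (hC _ ⟨t, rfl⟩) (hC _ ⟨-t, rfl⟩)⟩)
  simpa using (hG.add_const (T⁻¹ • Y)).congr' ((eventually_ne_atTop 0).mono h_eq)

end Function.Periodic

theorem MeasurableSet.measureReal_inter_Icc_eq_intervalIntegral {s : Set ℝ} (hs : MeasurableSet s)
    {a b : ℝ} (hab : a ≤ b) : volume.real (s ∩ Icc a b) = ∫ x in a..b, s.indicator 1 x := by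
  rw [intervalIntegral.integral_of_le hab, ← integral_Icc_eq_integral_Ioc,
    integral_indicator_one hs, measureReal_restrict_apply hs]

/-- A `q`-periodic Lebesgue measurable set has asymptotic density
`λ(E ∩ [a, a+q])/q` for every `a`. -/
theorem periodic_set_density (E : Set ℝ) (hE : MeasurableSet E) (q : ℝ) (hq : 0 < q)
    (hper : ∀ x : ℝ, x ∈ E ↔ x + q ∈ E) (a : ℝ) :
    Tendsto (fun t : ℝ => (volume (E ∩ Set.Icc (-t) t)).toReal / (2 * t)) atTop
      (𝓝 ((volume (E ∩ Set.Icc a (a + q))).toReal / q)) := by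
  classical
  have hg : Function.Periodic (E.indicator (1 : ℝ → ℝ)) q := fun x => by
    simp only [indicator_apply, Pi.one_apply, ← hper x]
  have h_int : IntervalIntegrable (E.indicator (1 : ℝ → ℝ)) volume 0 q :=
    intervalIntegrable_iff.2 ((integrableOn_const (C := (1 : ℝ)) (by simp)).indicator hE)
  have hlim := hg.tendsto_inv_two_mul_smul_intervalIntegral_neg hq.ne' h_int
  rw [← measureReal_def, hE.measureReal_inter_Icc_eq_intervalIntegral (by linarith),
    hg.intervalIntegral_add_eq a 0, zero_add, div_eq_inv_mul]
  refine hlim.congr' ?_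
  filter_upwards [eventually_ge_atTop 0] with t ht
  rw [← measureReal_def, hE.measureReal_inter_Icc_eq_intervalIntegral (by linarith), smul_eq_mul,
    div_eq_inv_mul]
end
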